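/- For real numbers u > v, the function ℓ ↦ ℓ·(e^{ℓ(v−u)} − ℓ(v−u) − 1)/(ℓ(v−u))², defined for ℓ > 0, is monotone increasing in ℓ and converges to (u − v)⁻¹ as ℓ → ∞. -/
import Mathlib

open Real Filter

lemma key_slope {a b : ℝ} (ha : 0 < a) (hab : a ≤ b) :
    (Real.exp (-a) - 1) / a ≤ (Real.exp (-b) - 1) / b := by
  have hb : 0 < b := lt_of_lt_of_le ha hab
  have h := convexOn_exp.secant_mono (a := 0) (x := -b) (y := -a)
    trivial trivial trivial (by intro h; linarith [neg_eq_zero.mp h])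
    (by intro h; linarith [neg_eq_zero.mp h]) (by linarith)
  simp only [Real.exp_zero, sub_zero, div_neg] at h
  linarith

lemma rewrite_fun (u v : ℝ) (huv : u > v) (ℓ : ℝ) (hℓ : 0 < ℓ) :
    ℓ * ((Real.exp (ℓ * (v - u)) - ℓ * (v - u) - 1) / (ℓ * (v - u)) ^ 2)
      = ((Real.exp (-(ℓ * (u - v))) - 1) / (ℓ * (u - v))) / (u - v) + (u - v)⁻¹ := by
  have hc : (0:ℝ) < u - v := by linarith
  have h1 : ℓ * (v - u) = -(ℓ * (u - v)) := by ring
  rw [h1]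
  field_simp
  ring

theorem stmt_4 (u v : ℝ) (huv : u > v) :
    MonotoneOn (fun ℓ : ℝ =>
      ℓ * ((Real.exp (ℓ * (v - u)) - ℓ * (v - u) - 1) / (ℓ * (v - u)) ^ 2))
      (Set.Ioi (0 : ℝ)) ∧
    Filter.Tendsto (fun ℓ : ℝ =>
      ℓ * ((Real.exp (ℓ * (v - u)) - ℓ * (v - u) - 1) / (ℓ * (v - u)) ^ 2))
      Filter.atTop (nhds (u - v)⁻¹) := by
  have hc : (0:ℝ) < u - v := by linarith
  constructor
  · intro a ha b hb hab
    simp only [Set.mem_Ioi] at ha hb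
    simp only []
    rw [rewrite_fun u v huv a ha, rewrite_fun u v huv b hb]
    have := key_slope (a := a * (u - v)) (b := b * (u - v))
      (by positivity) (by nlinarith)
    gcongr
  · have hmul : Tendsto (fun ℓ : ℝ => ℓ * (u - v)) atTop atTop :=
      Tendsto.atTop_mul_const hc tendsto_id
    have h1 : Tendsto (fun ℓ : ℝ => (Real.exp (-(ℓ * (u - v))) - 1) / (ℓ * (u - v)))
        atTop (nhds 0) := by
      have he : Tendsto (fun ℓ : ℝ => Real.exp (-(ℓ * (u - v))) - 1) atTop (nhds (0 - 1)) :=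
        ((Real.tendsto_exp_neg_atTop_nhds_zero).comp hmul).sub_const 1
      have hinv : Tendsto (fun ℓ : ℝ => (ℓ * (u - v))⁻¹) atTop (nhds 0) :=
        hmul.inv_tendsto_atTop
      have := he.mul hinv
      simpa [div_eq_mul_inv] using this
    have hfin : Tendsto (fun ℓ : ℝ =>
        ((Real.exp (-(ℓ * (u - v))) - 1) / (ℓ * (u - v))) / (u - v) + (u - v)⁻¹)
        atTop (nhds (0 / (u - v) + (u - v)⁻¹)) :=
      (h1.div_const _).add_const _
    rw [zero_div, zero_add] at hfin
    refine hfin.congr' ?_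
    filter_upwards [eventually_gt_atTop 0] with ℓ hℓ
    rw [rewrite_fun u v huv ℓ hℓ]
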